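/- arXiv:2306.01510 — 6 statements merged into one kernel-verified Lean document; each statement's English description precedes it below -/
import Mathlib

section
/- The map α(U) : {0, 1, …, m−1} × G̃/(Ũ ∩ M̃) → G/U × ℤ sending (p, z̃(Ũ ∩ M̃)) to (pr(z̃)U, μ(z̃) + p) is well defined and bijective, and it is G̃-equivariant, where g̃ ∈ G̃ acts on the source by g̃·(p, z̃(Ũ ∩ M̃)) = (p, g̃z̃(Ũ ∩ M̃)) and on the target by g̃·(gU, k) = (pr(g̃)gU, μ(g̃) + k). -/
/-- `pr : G̃ → G` is a surjective homomorphism of groups with kernel `C̃`, `μ : G̃ → ℤ` is a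
group homomorphism (formalized as `μ : G̃ →* Multiplicative ℤ`) with kernel `M̃`, and
`m ≥ 1` is an integer such that `μ(C̃) = mℤ`.  `U ≤ G` is a subgroup with preimage
`Ũ = pr⁻¹(U)` satisfying `μ(Ũ) = mℤ`.

The map `α(U) : {0,…,m−1} × G̃/(Ũ ∩ M̃) → G/U × ℤ`, `(p, z̃(Ũ ∩ M̃)) ↦ (pr(z̃)U, μ(z̃)+p)`,
is well defined and bijective, and it is `G̃`-equivariant for the actions
`g̃·(p, z̃(Ũ∩M̃)) = (p, g̃z̃(Ũ∩M̃))` and `g̃·(gU, k) = (pr(g̃)gU, μ(g̃)+k)`. -/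
theorem statement7 {Gt G : Type*} [Group Gt] [Group G] (pr : Gt →* G)
    (hpr : Function.Surjective pr) (μ : Gt →* Multiplicative ℤ) (m : ℕ) (hm : 1 ≤ m)
    (hC : Subgroup.map μ pr.ker = Subgroup.zpowers (Multiplicative.ofAdd (m : ℤ)))
    (U : Subgroup G)
    (hU : Subgroup.map μ (U.comap pr) = Subgroup.zpowers (Multiplicative.ofAdd (m : ℤ))) :
    ∃ α : Fin m × (Gt ⧸ (U.comap pr ⊓ μ.ker)) → (G ⧸ U) × ℤ,
      (∀ (p : Fin m) (z : Gt),
        α (p, QuotientGroup.mk z) =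
          (QuotientGroup.mk (pr z), Multiplicative.toAdd (μ z) + (p : ℤ))) ∧
      Function.Bijective α ∧
      ∀ (g : Gt) (p : Fin m) (x : Gt ⧸ (U.comap pr ⊓ μ.ker)),
        α (p, g • x) = (pr g • (α (p, x)).1, Multiplicative.toAdd (μ g) + (α (p, x)).2) := by
  set H : Subgroup Gt := U.comap pr ⊓ μ.ker with hH
  -- definition
  refine ⟨fun pz => Quotient.liftOn' pz.2
      (fun z => ((QuotientGroup.mk (pr z) : G ⧸ U),
        Multiplicative.toAdd (μ z) + (pz.1 : ℤ))) ?_, ?_, ⟨?_, ?_⟩, ?_⟩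
  · intro z w hzw
    rw [QuotientGroup.leftRel_apply] at hzw
    obtain ⟨h1, h2⟩ := hzw
    have hpr' : QuotientGroup.mk (pr z) = (QuotientGroup.mk (pr w) : G ⧸ U) := by
      rw [QuotientGroup.eq]
      simpa using h1
    have hμ : μ z = μ w := by
      have : μ (z⁻¹ * w) = 1 := h2
      rw [map_mul, map_inv] at this
      exact (inv_mul_eq_one.mp this)
    simp [hpr', hμ]
  · intro p z; rfl
  · -- injective
    rintro ⟨p, x⟩ ⟨q, y⟩ h
    induction x using QuotientGroup.induction_on with | H z =>
    induction y using QuotientGroup.induction_on with | H w =>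
    simp only [Quotient.liftOn'_mk, Prod.mk.injEq] at h
    obtain ⟨h1, h2⟩ := h
    have hzw : z⁻¹ * w ∈ U.comap pr := by
      have := QuotientGroup.eq.mp h1
      simpa using this
    have hmem : μ (z⁻¹ * w) ∈ Subgroup.zpowers (Multiplicative.ofAdd (m : ℤ)) := by
      rw [← hU]; exact ⟨_, hzw, rfl⟩
    obtain ⟨t, ht⟩ := hmem
    have hval : Multiplicative.toAdd (μ w) - Multiplicative.toAdd (μ z) = (m : ℤ) * t := by
      have := congrArg Multiplicative.toAdd ht
      simp only [← ofAdd_zsmul, smul_eq_mul, toAdd_ofAdd, map_mul, map_inv, toAdd_mul,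
        toAdd_inv] at this
      linarith
    have hpq : (p : ℤ) - (q : ℤ) = (m : ℤ) * t := by linarith
    have hb1 : (p : ℤ) < m := by exact_mod_cast p.2
    have hb2 : (q : ℤ) < m := by exact_mod_cast q.2
    have hp0 : (0 : ℤ) ≤ p := Int.ofNat_nonneg _
    have hq0 : (0 : ℤ) ≤ q := Int.ofNat_nonneg _
    have ht0 : t = 0 := by nlinarith [hpq, hb1, hb2, hp0, hq0]
    rw [ht0, mul_zero] at hpq hval
    have hpq' : p = q := Fin.ext (by exact_mod_cast sub_eq_zero.mp hpq : p.val = q.val)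
    have hzw' : QuotientGroup.mk z = (QuotientGroup.mk w : Gt ⧸ H) := by
      rw [QuotientGroup.eq]
      refine ⟨hzw, ?_⟩
      show μ (z⁻¹ * w) = 1
      have : Multiplicative.toAdd (μ (z⁻¹ * w)) = 0 := by
        rw [map_mul, map_inv, toAdd_mul, toAdd_inv]; omega
      exact toAdd_eq_zero.mp this
    exact Prod.ext hpq' hzw'
  · -- surjective
    rintro ⟨c, k⟩
    obtain ⟨g, rfl⟩ := QuotientGroup.mk_surjective c
    obtain ⟨z, rfl⟩ := hpr g
    set d : ℤ := k - Multiplicative.toAdd (μ z) with hd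
    have hm' : (0 : ℤ) < m := by exact_mod_cast hm
    have hr0 : 0 ≤ d % m := Int.emod_nonneg d (by positivity)
    have hr1 : d % m < m := Int.emod_lt_of_pos d hm'
    refine ⟨(⟨(d % m).toNat, by omega⟩, ?_), ?_⟩
    · -- will fill element below
      exact QuotientGroup.mk (z * Classical.choose (show ∃ u, u ∈ U.comap pr ∧
        μ u = Multiplicative.ofAdd ((m : ℤ) * (d / m)) from by
          have : Multiplicative.ofAdd ((m : ℤ) * (d / m)) ∈
              Subgroup.zpowers (Multiplicative.ofAdd (m : ℤ)) := by
            exact ⟨d / m, by rw [mul_comm, ← smul_eq_mul, ofAdd_zsmul]⟩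
          rw [← hU] at this
          obtain ⟨u, hu, hu'⟩ := this
          exact ⟨u, hu, hu'⟩))
    · set ex := (show ∃ u, u ∈ U.comap pr ∧
        μ u = Multiplicative.ofAdd ((m : ℤ) * (d / m)) from by
          have : Multiplicative.ofAdd ((m : ℤ) * (d / m)) ∈
              Subgroup.zpowers (Multiplicative.ofAdd (m : ℤ)) := by
            exact ⟨d / m, by rw [mul_comm, ← smul_eq_mul, ofAdd_zsmul]⟩
          rw [← hU] at this
          obtain ⟨u, hu, hu'⟩ := this
          exact ⟨u, hu, hu'⟩)
      obtain ⟨hu, hu'⟩ := Classical.choose_spec ex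
      simp only [Quotient.liftOn'_mk]
      refine Prod.ext ?_ ?_
      · show (QuotientGroup.mk (pr (z * _)) : G ⧸ U) = _
        rw [map_mul, QuotientGroup.mk_mul_of_mem]
        exact hu
      · show Multiplicative.toAdd (μ (z * _)) + _ = k
        rw [map_mul, toAdd_mul, hu']
        simp only [toAdd_ofAdd]
        have : (((d % m).toNat : ℤ)) = d % m := Int.toNat_of_nonneg hr0
        rw [this]
        have := Int.emod_add_mul_ediv d m
        omega
  · -- equivariance
    intro g p x
    induction x using QuotientGroup.induction_on with | H z =>
    rw [MulAction.Quotient.smul_mk]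
    simp only [Quotient.liftOn'_mk, smul_eq_mul, map_mul, toAdd_mul]
    refine Prod.ext ?_ ?_
    · show (QuotientGroup.mk (pr g * pr z) : G ⧸ U) = pr g • QuotientGroup.mk (pr z)
      rw [MulAction.Quotient.smul_mk, smul_eq_mul]
    · show _ = Multiplicative.toAdd (μ g) + (Multiplicative.toAdd (μ z) + (p : ℤ))
      ring
end

section
/- Let U, V be subgroups of G with μ(Ũ) = μ(Ṽ) = mℤ, let g ∈ G satisfy gUg⁻¹ ⊆ V, and let g̃ ∈ G̃ satisfy pr(g̃) = g. Then the map R_{g̃⁻¹} : G̃/(Ũ ∩ M̃) → G̃/(Ṽ ∩ M̃), z̃(Ũ ∩ M̃) ↦ z̃g̃⁻¹(Ṽ ∩ M̃), is a well-defined G̃-equivariant map, and α(V) ∘ (id_{{0,…,m−1}} × R_{g̃⁻¹}) = (R_{g⁻¹} × sh_{−μ(g̃)}) ∘ α(U), where R_{g⁻¹} : G/U → G/V sends zU to zg⁻¹V and sh_a : ℤ → ℤ sends k to k + a. -/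
/-- Setting: `pr : G̃ → G` surjective with kernel `C̃`, `μ : G̃ →* Multiplicative ℤ` with
kernel `M̃`, `m ≥ 1` with `μ(C̃) = mℤ`; for a subgroup `U ≤ G`, `Ũ = pr⁻¹(U)`, and
`α(U) : {0,…,m−1} × G̃/(Ũ ∩ M̃) → G/U × ℤ` sends `(p, z̃(Ũ∩M̃))` to `(pr(z̃)U, μ(z̃)+p)`.

Let `U, V ≤ G` with `μ(Ũ) = μ(Ṽ) = mℤ`, let `g ∈ G` with `gUg⁻¹ ⊆ V` and `g̃ ∈ G̃` with
`pr(g̃) = g`.  Then `R_{g̃⁻¹} : G̃/(Ũ∩M̃) → G̃/(Ṽ∩M̃)`, `z̃(Ũ∩M̃) ↦ z̃g̃⁻¹(Ṽ∩M̃)`, is a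
well-defined `G̃`-equivariant map, and
`α(V) ∘ (id × R_{g̃⁻¹}) = (R_{g⁻¹} × sh_{−μ(g̃)}) ∘ α(U)`, where `R_{g⁻¹} : G/U → G/V`
sends `zU` to `zg⁻¹V` and `sh_a : ℤ → ℤ` sends `k` to `k + a`. -/
theorem statement9 {Gt G : Type*} [Group Gt] [Group G] (pr : Gt →* G)
    (hpr : Function.Surjective pr) (μ : Gt →* Multiplicative ℤ) (m : ℕ) (hm : 1 ≤ m)
    (hC : Subgroup.map μ pr.ker = Subgroup.zpowers (Multiplicative.ofAdd (m : ℤ)))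
    (U V : Subgroup G)
    (hU : Subgroup.map μ (U.comap pr) = Subgroup.zpowers (Multiplicative.ofAdd (m : ℤ)))
    (hV : Subgroup.map μ (V.comap pr) = Subgroup.zpowers (Multiplicative.ofAdd (m : ℤ)))
    (g : G) (hg : ∀ u ∈ U, g * u * g⁻¹ ∈ V) (gt : Gt) (hgt : pr gt = g) :
    ∃ (αU : Fin m × (Gt ⧸ (U.comap pr ⊓ μ.ker)) → (G ⧸ U) × ℤ)
      (αV : Fin m × (Gt ⧸ (V.comap pr ⊓ μ.ker)) → (G ⧸ V) × ℤ)
      (Rt : Gt ⧸ (U.comap pr ⊓ μ.ker) → Gt ⧸ (V.comap pr ⊓ μ.ker))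
      (Rg : G ⧸ U → G ⧸ V),
      (∀ (p : Fin m) (z : Gt),
        αU (p, QuotientGroup.mk z) =
          (QuotientGroup.mk (pr z), Multiplicative.toAdd (μ z) + (p : ℤ))) ∧
      (∀ (p : Fin m) (z : Gt),
        αV (p, QuotientGroup.mk z) =
          (QuotientGroup.mk (pr z), Multiplicative.toAdd (μ z) + (p : ℤ))) ∧
      (∀ z : Gt, Rt (QuotientGroup.mk z) = QuotientGroup.mk (z * gt⁻¹)) ∧
      (∀ (a : Gt) (x : Gt ⧸ (U.comap pr ⊓ μ.ker)), Rt (a • x) = a • Rt x) ∧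
      (∀ z : G, Rg (QuotientGroup.mk z) = QuotientGroup.mk (z * g⁻¹)) ∧
      ∀ y : Fin m × (Gt ⧸ (U.comap pr ⊓ μ.ker)),
        αV (y.1, Rt y.2) = (Rg (αU y).1, (αU y).2 + -(Multiplicative.toAdd (μ gt))) := by

  classical
  -- α maps
  refine ⟨fun y => Quotient.liftOn' y.2
      (fun z => (QuotientGroup.mk (pr z), Multiplicative.toAdd (μ z) + (y.1 : ℤ)))
      (fun a b hab => ?_),
    fun y => Quotient.liftOn' y.2
      (fun z => (QuotientGroup.mk (pr z), Multiplicative.toAdd (μ z) + (y.1 : ℤ)))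
      (fun a b hab => ?_),
    Quotient.map' (fun z => z * gt⁻¹) (fun a b hab => ?_),
    Quotient.map' (fun z => z * g⁻¹) (fun a b hab => ?_),
    ?_, ?_, ?_, ?_, ?_, ?_⟩
  · have h := QuotientGroup.leftRel_apply.mp hab
    obtain ⟨hU', hM⟩ := h
    have hμ : μ a = μ b := by
      have h1 : (μ a)⁻¹ * μ b = 1 := by simpa [map_mul] using hM
      exact inv_mul_eq_one.mp h1
    refine Prod.ext ?_ ?_
    · exact (QuotientGroup.eq).mpr (by simpa using hU')
    · simp [hμ]
  · have h := QuotientGroup.leftRel_apply.mp hab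
    obtain ⟨hV', hM⟩ := h
    have hμ : μ a = μ b := by
      have h1 : (μ a)⁻¹ * μ b = 1 := by simpa [map_mul] using hM
      exact inv_mul_eq_one.mp h1
    refine Prod.ext ?_ ?_
    · exact (QuotientGroup.eq).mpr (by simpa using hV')
    · simp [hμ]
  · have h := QuotientGroup.leftRel_apply.mp hab
    obtain ⟨hU', hM⟩ := h
    refine QuotientGroup.leftRel_apply.mpr ⟨?_, ?_⟩
    · have : (a * gt⁻¹)⁻¹ * (b * gt⁻¹) = gt * (a⁻¹ * b) * gt⁻¹ := by group
      rw [this]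
      simpa [map_mul, map_inv, hgt, mul_assoc] using hg _ hU'
    · have : (a * gt⁻¹)⁻¹ * (b * gt⁻¹) = gt * (a⁻¹ * b) * gt⁻¹ := by group
      rw [this]
      have h1 : μ (a⁻¹ * b) = 1 := hM
      simpa [MonoidHom.mem_ker, map_mul, map_inv, h1] using (mul_inv_cancel (μ gt))
  · have hU' := QuotientGroup.leftRel_apply.mp hab
    refine QuotientGroup.leftRel_apply.mpr ?_
    have : (a * g⁻¹)⁻¹ * (b * g⁻¹) = g * (a⁻¹ * b) * g⁻¹ := by group
    rw [this]
    exact hg _ hU'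
  · intro p z; rfl
  · intro p z; rfl
  · intro z; rfl
  · intro a x
    induction x using Quotient.inductionOn' with
    | h z =>
      show QuotientGroup.mk (a * z * gt⁻¹) = a • QuotientGroup.mk (z * gt⁻¹)
      rw [mul_assoc]
      rfl
  · intro z; rfl
  · rintro ⟨p, x⟩
    induction x using Quotient.inductionOn' with
    | h z =>
      simp only [Quotient.map'_mk'', Quotient.liftOn'_mk'']
      refine Prod.ext ?_ ?_
      · show (QuotientGroup.mk (pr (z * gt⁻¹)) : G ⧸ V) = QuotientGroup.mk (pr z * g⁻¹)
        simp [map_mul, map_inv, hgt]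
      · show Multiplicative.toAdd (μ (z * gt⁻¹)) + (p : ℤ) =
          Multiplicative.toAdd (μ z) + (p : ℤ) + -(Multiplicative.toAdd (μ gt))
        simp [map_mul, map_inv]
        ring
end

section
/- The set {ĥᵇ·B·D : b ∈ ℤ, B ∈ I^G, D ∈ Z} intersected with M̃ equals the Iwahori subgroup I^G. -/
/-- The matrix `ĥ`: `(i, i+1)`-entries `1`, `(n,1)`-entry the uniformizer `ζ`, all other
entries `0` (written with `0`-based indices `Fin n`). -/
def hHat (F : Type*) [Field F] (n : ℕ) (ζ : F) : Matrix (Fin n) (Fin n) F :=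
  Matrix.of fun i j =>
    if (i : ℕ) + 1 = (j : ℕ) then 1
    else if (i : ℕ) = n - 1 ∧ (j : ℕ) = 0 then ζ else 0


section aux
variable {F : Type*} [Field F] (v : AddValuation F (WithTop ℤ))

lemma coe_nsmul_withTop (k : ℕ) (a : ℤ) : k • ((a : WithTop ℤ)) = ((k • a : ℤ) : WithTop ℤ) := by
  induction k with
  | zero => simp
  | succ k ih => rw [succ_nsmul, succ_nsmul, ih, WithTop.coe_add]

lemma v_inv_aux (hv0 : ∀ x : F, v x = ⊤ ↔ x = 0) {x : F} (hx : x ≠ 0) {a : ℤ}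
    (ha : v x = (a : WithTop ℤ)) : v x⁻¹ = ((-a : ℤ) : WithTop ℤ) := by
  have h1 : v x + v x⁻¹ = 0 := by
    rw [← v.map_mul, mul_inv_cancel₀ hx, v.map_one]
  rw [ha] at h1
  cases hxv : v x⁻¹ with
  | top => rw [hxv] at h1; simp at h1
  | coe c =>
    rw [hxv, ← WithTop.coe_add, ← WithTop.coe_zero, WithTop.coe_eq_coe] at h1
    rw [WithTop.coe_eq_coe]
    omega

lemma v_zpow_aux (hv0 : ∀ x : F, v x = ⊤ ↔ x = 0) {x : F} (hx : x ≠ 0) {a : ℤ}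
    (ha : v x = (a : WithTop ℤ)) (k : ℤ) : v (x ^ k) = ((k * a : ℤ) : WithTop ℤ) := by
  cases k with
  | ofNat j =>
    rw [Int.ofNat_eq_natCast, zpow_natCast, v.map_pow, ha, coe_nsmul_withTop]
    norm_num
  | negSucc j =>
    rw [zpow_negSucc]
    have hpow : v (x ^ (j + 1)) = (((j + 1 : ℕ) • a : ℤ) : WithTop ℤ) := by
      rw [v.map_pow, ha, coe_nsmul_withTop]
    rw [v_inv_aux v hv0 (pow_ne_zero _ hx) hpow, WithTop.coe_eq_coe]
    simp [Int.negSucc_eq]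
    ring

end aux

lemma hpow_aux {F : Type*} [Field F] (n : ℕ) (ζ : F) (k : ℕ) (hk : k ≤ n) :
    (hHat F n ζ) ^ k = Matrix.of fun i j : Fin n =>
      if (i : ℕ) + k = (j : ℕ) then 1
      else if (i : ℕ) + k = n + (j : ℕ) then ζ else 0 := by
  induction k with
  | zero =>
    ext i j
    have hi := i.2; have hj := j.2
    simp only [pow_zero, Matrix.one_apply, Matrix.of_apply, Fin.ext_iff]
    split_ifs <;> (try rfl) <;> (try (exfalso; omega)) <;> simp_all
  | succ k ih =>
    rw [pow_succ', ih (by omega)]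
    ext i j
    have hi := i.2; have hj := j.2
    rw [Matrix.mul_apply]
    by_cases hlt : (i : ℕ) + 1 < n
    · rw [Finset.sum_eq_single (⟨(i : ℕ) + 1, hlt⟩ : Fin n)]
      · simp only [hHat, Matrix.of_apply]
        split_ifs <;> (try ring) <;> (try (exfalso; omega)) <;> simp_all
      · intro l _ hne
        have hlv : (l : ℕ) ≠ (i : ℕ) + 1 := fun h => hne (Fin.ext h)
        simp only [hHat, Matrix.of_apply]
        rw [if_neg (by omega), if_neg (by omega), zero_mul]
      · intro h; exact absurd (Finset.mem_univ _) h
    · have hin : (i : ℕ) = n - 1 := by omega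
      rw [Finset.sum_eq_single (⟨0, by omega⟩ : Fin n)]
      · simp only [hHat, Matrix.of_apply]
        split_ifs <;> (try ring) <;> (try (exfalso; omega)) <;> simp_all
      · intro l _ hne
        have hlv : (l : ℕ) ≠ 0 := fun h => hne (Fin.ext h)
        simp only [hHat, Matrix.of_apply]
        rw [if_neg (by omega), if_neg (by omega), zero_mul]
      · intro h; exact absurd (Finset.mem_univ _) h

lemma hpow_n {F : Type*} [Field F] (n : ℕ) (ζ : F) (hn : 1 ≤ n) :
    (hHat F n ζ) ^ n = ζ • (1 : Matrix (Fin n) (Fin n) F) := by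
  rw [hpow_aux n ζ n le_rfl]
  ext i j
  have hi := i.2; have hj := j.2
  simp only [Matrix.of_apply, Matrix.smul_apply, Matrix.one_apply, Fin.ext_iff, smul_eq_mul]
  split_ifs <;> (try ring) <;> (try (exfalso; omega)) <;> simp_all

/-- The Iwahori subgroup `I^G` of `GL_n(F)`: all `A` with `v(det A) = 0`,
`v(A_{ij}) ≥ 0` for all `i, j`, and `v(A_{ij}) ≥ 1` for `i > j`. -/
def IwahoriG (F : Type*) [Field F] (v : AddValuation F (WithTop ℤ)) (n : ℕ) :
    Set (Matrix (Fin n) (Fin n) F) :=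
  {A | v A.det = 0 ∧ (∀ i j, 0 ≤ v (A i j)) ∧
    ∀ i j : Fin n, (j : ℕ) < (i : ℕ) → 1 ≤ v (A i j)}

/-- `Z`: the invertible scalar matrices `λ·I_n`, `λ ∈ F^×`. -/
def scalarZ (F : Type*) [Field F] (n : ℕ) : Set (Matrix (Fin n) (Fin n) F) :=
  {A | ∃ lam : Fˣ, A = (lam : F) • 1}


/-- `F` is a field with surjective discrete valuation `v`, `𝒪` its valuation ring, `ζ` a
uniformizer, `n ≥ 1`; `M̃ = {A ∈ GL_n(F) : v(det A) = 0}`.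

The set `{ĥᵇ·B·D : b ∈ ℤ, B ∈ I^G, D ∈ Z}` intersected with `M̃` equals the Iwahori
subgroup `I^G`. -/
theorem statement12 (F : Type*) [Field F] (v : AddValuation F (WithTop ℤ))
    (hv : Function.Surjective v) (hv0 : ∀ x : F, v x = ⊤ ↔ x = 0)
    (ζ : F) (hζ : v ζ = 1) (n : ℕ) (hn : 1 ≤ n) :
    {X : Matrix (Fin n) (Fin n) F |
        ∃ b : ℤ, ∃ B ∈ IwahoriG F v n, ∃ D ∈ scalarZ F n,
          X = hHat F n ζ ^ b * B * D} ∩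
      {A : Matrix (Fin n) (Fin n) F | v A.det = 0} = IwahoriG F v n := by
  have hζ0 : ζ ≠ 0 := by
    intro h
    rw [h, (hv0 0).2 rfl] at hζ
    exact (by simp : ((⊤ : WithTop ℤ) ≠ ((1:ℤ) : WithTop ℤ))) (by exact_mod_cast hζ)
  have hζ1 : v ζ = ((1 : ℤ) : WithTop ℤ) := by exact_mod_cast hζ
  have hpown : (hHat F n ζ) ^ n = ζ • (1 : Matrix (Fin n) (Fin n) F) := hpow_n n ζ hn
  -- determinant of hHat
  have hdn : (hHat F n ζ).det ^ n = ζ ^ n := by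
    rw [← Matrix.det_pow, hpown, Matrix.det_smul, Matrix.det_one, mul_one, Fintype.card_fin]
  have hdne : (hHat F n ζ).det ≠ 0 := by
    intro h
    rw [h, zero_pow (by omega)] at hdn
    exact pow_ne_zero n hζ0 hdn.symm
  have hvd : v (hHat F n ζ).det = ((1 : ℤ) : WithTop ℤ) := by
    cases hvdc : v (hHat F n ζ).det with
    | top => exact absurd ((hv0 _).1 hvdc) hdne
    | coe a =>
      have h1 : v ((hHat F n ζ).det ^ n) = ((n • a : ℤ) : WithTop ℤ) := by
        rw [v.map_pow, hvdc, coe_nsmul_withTop]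
      have h2 : v (ζ ^ n) = ((n • (1:ℤ) : ℤ) : WithTop ℤ) := by
        rw [v.map_pow, hζ1, coe_nsmul_withTop]
      rw [hdn, h2, WithTop.coe_eq_coe] at h1
      have : a = 1 := by
        have hn' : (n:ℤ) ≠ 0 := by exact_mod_cast Nat.one_le_iff_ne_zero.mp hn
        simp only [nsmul_eq_mul] at h1
        exact (mul_left_cancel₀ hn' h1).symm
      rw [WithTop.coe_eq_coe, this]
  have hU : IsUnit (hHat F n ζ) := (Matrix.isUnit_iff_isUnit_det _).2 (isUnit_iff_ne_zero.2 hdne)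
  -- determinant of zpow
  have hdetzpow : ∀ b : ℤ, ((hHat F n ζ) ^ b).det = (hHat F n ζ).det ^ b := by
    intro b
    have e : ∀ u : (Matrix (Fin n) (Fin n) F)ˣ, ((u : Matrix (Fin n) (Fin n) F)).det
        = ((Units.map Matrix.detMonoidHom u : Fˣ) : F) := fun u => rfl
    calc ((hHat F n ζ) ^ b).det
        = ((hU.unit ^ b : _ˣ) : Matrix (Fin n) (Fin n) F).det := by
          rw [Matrix.coe_units_zpow, hU.unit_spec]
      _ = ((Units.map Matrix.detMonoidHom (hU.unit ^ b) : Fˣ) : F) := e _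
      _ = (((Units.map Matrix.detMonoidHom hU.unit) ^ b : Fˣ) : F) := by rw [map_zpow]
      _ = ((Units.map Matrix.detMonoidHom hU.unit : Fˣ) : F) ^ b :=
          Units.val_zpow_eq_zpow_val _ _
      _ = (hHat F n ζ).det ^ b := by rw [← e, hU.unit_spec]
  ext X
  constructor
  · rintro ⟨⟨b, B, hB, D, ⟨lam, rfl⟩, rfl⟩, hdet⟩
    -- extract v lam
    obtain ⟨m, hm⟩ : ∃ m : ℤ, v (lam : F) = (m : WithTop ℤ) := by
      cases hvl : v (lam : F) with
      | top => exact absurd ((hv0 _).1 hvl) lam.ne_zero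
      | coe m => exact ⟨m, rfl⟩
    -- compute the determinant valuation
    have hdetprod : v ((hHat F n ζ ^ b * B * ((lam : F) • 1)).det) =
        ((b + n • m : ℤ) : WithTop ℤ) := by
      rw [Matrix.det_mul, Matrix.det_mul, Matrix.det_smul, Matrix.det_one, mul_one,
        Fintype.card_fin, v.map_mul, v.map_mul, hdetzpow,
        v_zpow_aux v hv0 hdne hvd, hB.1, v.map_pow, hm, coe_nsmul_withTop]
      rw [mul_one, add_zero, ← WithTop.coe_add]
    have hbm : b = (n : ℤ) * (-m) := by
      have hdet' : v ((hHat F n ζ ^ b * B * ((lam : F) • 1)).det) = 0 := hdet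
      rw [hdetprod] at hdet'
      have : (b + n • m : ℤ) = 0 := by exact_mod_cast hdet'
      simp only [nsmul_eq_mul] at this
      linarith
    -- identify hHat ^ b as a scalar matrix
    have hscalar : (hHat F n ζ) ^ b = (ζ ^ (-m : ℤ)) • (1 : Matrix (Fin n) (Fin n) F) := by
      have hSn : hU.unit ^ n = Units.map (Matrix.scalar (Fin n)).toMonoidHom
          (Units.mk0 ζ hζ0) := by
        refine Units.ext ?_
        rw [Units.val_pow_eq_pow_val, hU.unit_spec, hpown, Units.coe_map]
        simp [Matrix.smul_one_eq_diagonal, Matrix.scalar_apply]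
      calc (hHat F n ζ) ^ b = ((hU.unit ^ b : _ˣ) : Matrix (Fin n) (Fin n) F) := by
            rw [Matrix.coe_units_zpow, hU.unit_spec]
        _ = (((hU.unit ^ (n : ℤ)) ^ (-m) : _ˣ) : Matrix (Fin n) (Fin n) F) := by
            rw [← zpow_mul, ← hbm]
        _ = ((Units.map (Matrix.scalar (Fin n)).toMonoidHom
              ((Units.mk0 ζ hζ0) ^ (-m)) : _ˣ) : Matrix (Fin n) (Fin n) F) := by
            rw [zpow_natCast, hSn, ← map_zpow]
        _ = (ζ ^ (-m : ℤ)) • (1 : Matrix (Fin n) (Fin n) F) := by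
            rw [Units.coe_map]
            simp [Matrix.scalar_apply, Matrix.smul_one_eq_diagonal,
              Units.val_zpow_eq_zpow_val]
    -- X = c • B
    set c : F := ζ ^ (-m : ℤ) * (lam : F) with hc
    have hXc : hHat F n ζ ^ b * B * ((lam : F) • 1) = c • B := by
      rw [hscalar, smul_mul_assoc, one_mul, mul_smul_comm, mul_one, smul_smul, mul_comm]
    have hvc : v c = 0 := by
      rw [hc, v.map_mul, v_zpow_aux v hv0 hζ0 hζ1, hm, ← WithTop.coe_add]
      norm_num
    rw [hXc]
    refine ⟨?_, ?_, ?_⟩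
    · rw [Matrix.det_smul, Fintype.card_fin, v.map_mul, hB.1, v.map_pow, hvc, smul_zero,
        add_zero]
    · intro i j
      rw [Matrix.smul_apply, smul_eq_mul, v.map_mul, hvc, zero_add]
      exact hB.2.1 i j
    · intro i j hij
      rw [Matrix.smul_apply, smul_eq_mul, v.map_mul, hvc, zero_add]
      exact hB.2.2 i j hij
  · intro hA
    refine ⟨⟨0, X, hA, 1, ⟨1, by simp⟩, by simp⟩, hA.1⟩
end

section
/- For every l with 0 ≤ l ≤ n−1, the conjugate ĥˡ SL_n(𝒪) ĥ⁻ˡ equals U_l^S; consequently (ĥˡ GL_n(𝒪) ĥ⁻ˡ) ∩ SL_n(F) = ĥˡ SL_n(𝒪) ĥ⁻ˡ = U_l^S. -/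
/-- `GL_n(𝒪)`: matrices with all entries in the valuation ring `𝒪` and `v(det A) = 0`. -/
def GLnO (F : Type*) [Field F] (v : AddValuation F (WithTop ℤ)) (n : ℕ) :
    Set (Matrix (Fin n) (Fin n) F) :=
  {A | (∀ i j, 0 ≤ v (A i j)) ∧ v A.det = 0}

/-- `SL_n(𝒪)`: matrices of determinant `1` with all entries in `𝒪`. -/
def SLnO (F : Type*) [Field F] (v : AddValuation F (WithTop ℤ)) (n : ℕ) :
    Set (Matrix (Fin n) (Fin n) F) :=
  {A | A.det = 1 ∧ ∀ i j, 0 ≤ v (A i j)}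

/-- The subgroup `U_l^S` of `SL_n(F)` (here as a set of matrices, with `0`-based
indices). -/
def USl (F : Type*) [Field F] (v : AddValuation F (WithTop ℤ)) (n l : ℕ) :
    Set (Matrix (Fin n) (Fin n) F) :=
  {A | A.det = 1 ∧ ∀ i j : Fin n,
    (((i : ℕ) < n - l ∧ n - l ≤ (j : ℕ)) → (-1 : WithTop ℤ) ≤ v (A i j)) ∧
    (((j : ℕ) < n - l ∧ n - l ≤ (i : ℕ)) → 1 ≤ v (A i j)) ∧
    ((¬((i : ℕ) < n - l ∧ n - l ≤ (j : ℕ)) ∧ ¬((j : ℕ) < n - l ∧ n - l ≤ (i : ℕ))) →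
      0 ≤ v (A i j))}

lemma hHat_pow (F : Type*) [Field F] (n : ℕ) (ζ : F) (hn : 1 ≤ n) (l : ℕ) :
    hHat F n ζ ^ l = Matrix.of fun i j : Fin n =>
      if ((i : ℕ) + l) % n = (j : ℕ) then ζ ^ (((i : ℕ) + l) / n) else 0 := by
  induction l with
  | zero =>
    ext i j
    simp only [pow_zero, Matrix.of_apply, Nat.add_zero]
    rw [Nat.mod_eq_of_lt i.isLt, Nat.div_eq_of_lt i.isLt, pow_zero]
    rcases eq_or_ne i j with h | h
    · simp [h, Matrix.one_apply]
    · simp [Matrix.one_apply, h, Fin.val_ne_of_ne h]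
  | succ l ih =>
    rw [pow_succ, ih]
    ext i j
    rw [Matrix.mul_apply]
    set a := ((i:ℕ) + l) % n with ha
    set q := ((i:ℕ) + l) / n with hq
    have hdm : n * q + a = (i:ℕ) + l := Nat.div_add_mod _ n
    have haa : a < n := Nat.mod_lt _ (by omega)
    rw [Fintype.sum_eq_single (⟨a, haa⟩ : Fin n) (by
      intro k hk
      have : ¬ ((i:ℕ) + l) % n = (k:ℕ) := fun h => hk (Fin.ext h.symm)
      simp [this])]
    simp only [Matrix.of_apply, ← ha, ← hq, if_pos rfl, hHat]
    by_cases hc : a = n - 1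
    · have he : (i:ℕ) + (l+1) = n * (q+1) := by rw [Nat.mul_succ]; omega
      have h1 : ((i:ℕ) + (l+1)) % n = 0 := by rw [he, Nat.mul_mod_right]
      have h2 : ((i:ℕ) + (l+1)) / n = q + 1 := by
        rw [he, Nat.mul_div_cancel_left _ (by omega : 0 < n)]
      have h3 : ¬ (a + 1 = (j:ℕ)) := by have := j.isLt; omega
      show ζ ^ q * _ = _
      by_cases hj : (j:ℕ) = 0
      · rw [h1, h2, if_neg h3, if_pos ⟨hc, hj⟩, if_pos hj.symm, pow_succ]
      · rw [h1, h2, if_neg h3, if_neg (fun hh => hj hh.2), if_neg (fun hh => hj hh.symm),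
          mul_zero]
    · have he : (i:ℕ) + (l+1) = n * q + (a+1) := by omega
      have h1 : ((i:ℕ) + (l+1)) % n = a + 1 := by
        rw [he, Nat.mul_add_mod, Nat.mod_eq_of_lt (by omega)]
      have h2 : ((i:ℕ) + (l+1)) / n = q := by
        rw [he, Nat.mul_add_div (by omega : 0 < n), Nat.div_eq_of_lt (by omega), Nat.add_zero]
      show ζ ^ q * _ = _
      by_cases hj : a + 1 = (j:ℕ)
      · rw [h1, h2, if_pos hj, if_pos hj, mul_one]
      · rw [h1, h2, if_neg hj, if_neg (fun hh => hc hh.1), if_neg hj, mul_zero]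

noncomputable def gInv (F : Type*) [Field F] (n l : ℕ) (ζ : F) : Matrix (Fin n) (Fin n) F :=
  Matrix.of fun i j : Fin n =>
    if ((j : ℕ) + l) % n = (i : ℕ) then (ζ ^ (((j : ℕ) + l) / n))⁻¹ else 0

lemma g_mul_gInv (F : Type*) [Field F] (n l : ℕ) (ζ : F) (hn : 1 ≤ n) (hz : ζ ≠ 0) :
    hHat F n ζ ^ l * gInv F n l ζ = 1 := by
  rw [hHat_pow F n ζ hn l]
  ext i j
  rw [Matrix.mul_apply]
  have haa : ((i:ℕ) + l) % n < n := Nat.mod_lt _ (by omega)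
  rw [Fintype.sum_eq_single (⟨((i:ℕ) + l) % n, haa⟩ : Fin n) (by
    intro k hk
    have : ¬ ((i:ℕ) + l) % n = (k:ℕ) := fun h => hk (Fin.ext h.symm)
    simp [this])]
  simp only [Matrix.of_apply, if_pos rfl, gInv, eq_self_iff_true, if_true]
  rcases eq_or_ne i j with h | h
  · subst h
    rw [if_pos rfl, mul_inv_cancel₀ (pow_ne_zero _ hz), Matrix.one_apply_eq]
  · have hij : ¬ ((j:ℕ) + l) % n = ((i:ℕ) + l) % n := by
      intro hh
      have h2 : (j:ℕ) % n = (i:ℕ) % n := Nat.ModEq.add_right_cancel' l hh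
      rw [Nat.mod_eq_of_lt j.isLt, Nat.mod_eq_of_lt i.isLt] at h2
      exact h (Fin.ext h2.symm)
    rw [if_neg hij, mul_zero, Matrix.one_apply_ne h]

lemma conj_apply (F : Type*) [Field F] (n l : ℕ) (ζ : F) (hn : 1 ≤ n)
    (A : Matrix (Fin n) (Fin n) F) (i j : Fin n) :
    (hHat F n ζ ^ l * A * gInv F n l ζ) i j =
      ζ ^ (((i:ℕ) + l) / n) *
        A ⟨((i:ℕ) + l) % n, Nat.mod_lt _ (by omega)⟩ ⟨((j:ℕ) + l) % n, Nat.mod_lt _ (by omega)⟩ *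
        (ζ ^ (((j:ℕ) + l) / n))⁻¹ := by
  rw [hHat_pow F n ζ hn l, Matrix.mul_apply]
  rw [Fintype.sum_eq_single (⟨((j:ℕ) + l) % n, Nat.mod_lt _ (by omega)⟩ : Fin n) (by
    intro k hk
    have : ¬ ((j:ℕ) + l) % n = (k:ℕ) := fun h => hk (Fin.ext h.symm)
    simp [gInv, this])]
  simp only [gInv, Matrix.of_apply, if_pos rfl, eq_self_iff_true, if_true]
  congr 1
  rw [Matrix.mul_apply]
  rw [Fintype.sum_eq_single (⟨((i:ℕ) + l) % n, Nat.mod_lt _ (by omega)⟩ : Fin n) (by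
    intro k hk
    have : ¬ ((i:ℕ) + l) % n = (k:ℕ) := fun h => hk (Fin.ext h.symm)
    simp [this])]
  simp only [Matrix.of_apply, eq_self_iff_true, if_true]

/-- `F` is a field with surjective discrete valuation `v`, `𝒪` its valuation ring, `ζ` a
uniformizer, `n ≥ 1`.

For every `l` with `0 ≤ l ≤ n−1`, the conjugate `ĥˡ SL_n(𝒪) ĥ⁻ˡ` equals `U_l^S`;
consequently `(ĥˡ GL_n(𝒪) ĥ⁻ˡ) ∩ SL_n(F) = ĥˡ SL_n(𝒪) ĥ⁻ˡ = U_l^S`. -/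
theorem statement15 (F : Type*) [Field F] (v : AddValuation F (WithTop ℤ))
    (hv : Function.Surjective v) (hv0 : ∀ x : F, v x = ⊤ ↔ x = 0)
    (ζ : F) (hζ : v ζ = 1) (n : ℕ) (hn : 1 ≤ n) (l : ℕ) (hl : l ≤ n - 1) :
    ((fun A => hHat F n ζ ^ l * A * (hHat F n ζ ^ l)⁻¹) '' SLnO F v n = USl F v n l) ∧
    ((fun A => hHat F n ζ ^ l * A * (hHat F n ζ ^ l)⁻¹) '' GLnO F v n ∩
        {A : Matrix (Fin n) (Fin n) F | A.det = 1} =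
      (fun A => hHat F n ζ ^ l * A * (hHat F n ζ ^ l)⁻¹) '' SLnO F v n) := by
  have hz : ζ ≠ 0 := fun h => absurd (hζ.symm.trans ((hv0 ζ).mpr h)) (by decide)
  have hgg : hHat F n ζ ^ l * gInv F n l ζ = 1 := g_mul_gInv F n l ζ hn hz
  have hinv : (hHat F n ζ ^ l)⁻¹ = gInv F n l ζ := Matrix.inv_eq_right_inv hgg
  have hdetgg : (hHat F n ζ ^ l).det * (gInv F n l ζ).det = 1 := by
    rw [← Matrix.det_mul, hgg, Matrix.det_one]
  have hvinv : v ζ⁻¹ = (-1 : WithTop ℤ) := by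
    have h := v.map_mul ζ ζ⁻¹
    rw [mul_inv_cancel₀ hz, v.map_one, hζ] at h
    rcases eq_or_ne (v ζ⁻¹) ⊤ with ht | ht
    · rw [ht] at h; simp at h
    · lift (v ζ⁻¹) to ℤ using ht with a ha
      have h2 : (1:ℤ) + a = 0 := by exact_mod_cast h.symm
      have h3 : a = -1 := by omega
      rw [h3]; decide
  have hei : ∀ i : Fin n, ((i:ℕ) + l) / n = if (i:ℕ) < n - l then 0 else 1 := by
    intro i
    have hi := i.isLt
    split
    · exact Nat.div_eq_of_lt (by omega)
    · exact Nat.div_eq_of_lt_le (by omega) (by omega)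
  have hsig : ∀ i' : Fin n, (((i':ℕ) + (n - l)) % n + l) % n = (i':ℕ) := by
    intro i'
    rw [Nat.mod_add_mod, show (i':ℕ) + (n - l) + l = (i':ℕ) + n by omega,
      Nat.add_mod_right, Nat.mod_eq_of_lt i'.isLt]
  constructor
  · ext B
    simp only [Set.mem_image, hinv]
    constructor
    · rintro ⟨A, ⟨hdet, hent⟩, rfl⟩
      show hHat F n ζ ^ l * A * gInv F n l ζ ∈ USl F v n l
      refine ⟨?_, fun i j => ⟨?_, ?_, ?_⟩⟩
      · rw [Matrix.det_mul, Matrix.det_mul, hdet, mul_one, hdetgg]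
      · rintro ⟨hi, hj⟩
        rw [conj_apply F n l ζ hn, hei, hei, if_pos hi, if_neg (not_lt.2 hj),
          pow_zero, pow_one, one_mul, v.map_mul, hvinv]
        calc (-1 : WithTop ℤ) = 0 + (-1) := by decide
          _ ≤ v (A _ _) + (-1) := add_le_add_left (hent _ _) _
      · rintro ⟨hj, hi⟩
        rw [conj_apply F n l ζ hn, hei, hei, if_neg (not_lt.2 hi), if_pos hj,
          pow_zero, pow_one, inv_one, mul_one, v.map_mul, hζ]
        calc (1 : WithTop ℤ) = 1 + 0 := by decide
          _ ≤ 1 + v (A _ _) := add_le_add_right (hent _ _) _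
      · rintro ⟨h1, h2⟩
        rw [conj_apply F n l ζ hn, hei, hei]
        by_cases hi : (i:ℕ) < n - l
        · have hj : (j:ℕ) < n - l := by
            by_contra hj; exact h1 ⟨hi, not_lt.1 hj⟩
          rw [if_pos hi, if_pos hj, pow_zero, one_mul, inv_one, mul_one]
          exact hent _ _
        · have hj : ¬ (j:ℕ) < n - l := fun hj => h2 ⟨hj, not_lt.1 hi⟩
          rw [if_neg hi, if_neg hj, pow_one, v.map_mul, v.map_mul, hζ, hvinv]
          calc (0 : WithTop ℤ) = 1 + 0 + (-1) := by decide
            _ ≤ 1 + v (A _ _) + (-1) := add_le_add_left (add_le_add_right (hent _ _) _) _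
    · rintro ⟨hdet, hreg⟩
      have hBA : hHat F n ζ ^ l * (gInv F n l ζ * B * hHat F n ζ ^ l) * gInv F n l ζ = B := by
        simp only [← Matrix.mul_assoc]
        rw [hgg, Matrix.one_mul, Matrix.mul_assoc, hgg, Matrix.mul_one]
      refine ⟨gInv F n l ζ * B * hHat F n ζ ^ l, ⟨?_, ?_⟩, hBA⟩
      · rw [Matrix.det_mul, Matrix.det_mul, hdet, mul_one, mul_comm]
        exact hdetgg
      · intro i' j'
        have hi'' : ((i':ℕ) + (n - l)) % n < n := Nat.mod_lt _ (by omega)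
        have hj'' : ((j':ℕ) + (n - l)) % n < n := Nat.mod_lt _ (by omega)
        have hkey := conj_apply F n l ζ hn (gInv F n l ζ * B * hHat F n ζ ^ l)
          ⟨_, hi''⟩ ⟨_, hj''⟩
        rw [hBA] at hkey
        have e1 : (⟨(((i':ℕ) + (n - l)) % n + l) % n,
            Nat.mod_lt _ (by omega)⟩ : Fin n) = i' := Fin.ext (hsig i')
        have e2 : (⟨(((j':ℕ) + (n - l)) % n + l) % n,
            Nat.mod_lt _ (by omega)⟩ : Fin n) = j' := Fin.ext (hsig j')
        rw [e1, e2, hei, hei] at hkey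
        set x := (gInv F n l ζ * B * hHat F n ζ ^ l) i' j' with hx
        by_cases hi : ((⟨((i':ℕ) + (n - l)) % n, hi''⟩ : Fin n) : ℕ) < n - l <;>
          by_cases hj : ((⟨((j':ℕ) + (n - l)) % n, hj''⟩ : Fin n) : ℕ) < n - l
        · rw [if_pos hi, if_pos hj, pow_zero, one_mul, inv_one, mul_one] at hkey
          have h0 := (hreg _ _).2.2 ⟨fun h => absurd h.2 (not_le.mpr hj),
            fun h => absurd h.2 (not_le.mpr hi)⟩
          rw [hkey] at h0
          exact h0
        · rw [if_pos hi, if_neg hj, pow_zero, pow_one, one_mul] at hkey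
          have hb := (hreg _ _).1 ⟨hi, not_lt.1 hj⟩
          have hxe : x = B (⟨((i':ℕ) + (n - l)) % n, hi''⟩ : Fin n) (⟨((j':ℕ) + (n - l)) % n, hj''⟩ : Fin n) * ζ := by rw [hkey, inv_mul_cancel_right₀ hz]
          rw [hxe, v.map_mul, hζ]
          calc (0 : WithTop ℤ) = -1 + 1 := by decide
            _ ≤ v (B _ _) + 1 := add_le_add_left hb _
        · rw [if_neg hi, if_pos hj, pow_zero, pow_one, inv_one, mul_one] at hkey
          have hb := (hreg _ _).2.1 ⟨hj, not_lt.1 hi⟩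
          have hxe : x = ζ⁻¹ * B (⟨((i':ℕ) + (n - l)) % n, hi''⟩ : Fin n) (⟨((j':ℕ) + (n - l)) % n, hj''⟩ : Fin n) := by rw [hkey, inv_mul_cancel_left₀ hz]
          rw [hxe, v.map_mul, hvinv]
          calc (0 : WithTop ℤ) = -1 + 1 := by decide
            _ ≤ -1 + v (B _ _) := add_le_add_right hb _
        · rw [if_neg hi, if_neg hj, pow_one] at hkey
          have h0 := (hreg _ _).2.2 ⟨fun h => absurd h.1 hi, fun h => absurd h.1 hj⟩
          have hxe : ζ⁻¹ * B (⟨((i':ℕ) + (n - l)) % n, hi''⟩ : Fin n)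
              (⟨((j':ℕ) + (n - l)) % n, hj''⟩ : Fin n) * ζ = x := by
            rw [hkey]; field_simp
          rw [← hxe, v.map_mul, v.map_mul, hvinv, hζ]
          calc (0 : WithTop ℤ) = -1 + 0 + 1 := by decide
            _ ≤ -1 + v (B _ _) + 1 := add_le_add_left (add_le_add_right h0 _) _
  · ext B
    simp only [Set.mem_inter_iff, Set.mem_image, Set.mem_setOf_eq, hinv]
    constructor
    · rintro ⟨⟨A, ⟨hent, hvdet⟩, rfl⟩, hdet1⟩
      refine ⟨A, ⟨?_, hent⟩, rfl⟩
      have hdet1' : (hHat F n ζ ^ l * A * gInv F n l ζ).det = 1 := hdet1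
      rw [Matrix.det_mul, Matrix.det_mul] at hdet1'
      have hc : A.det * ((hHat F n ζ ^ l).det * (gInv F n l ζ).det) = 1 := by
        rw [← hdet1']; ring
      rwa [hdetgg, mul_one] at hc
    · rintro ⟨A, ⟨hdet, hent⟩, rfl⟩
      refine ⟨⟨A, ⟨hent, by rw [hdet]; exact v.map_one⟩, rfl⟩, ?_⟩
      show (hHat F n ζ ^ l * A * gInv F n l ζ).det = 1
      rw [Matrix.det_mul, Matrix.det_mul, hdet, mul_one, hdetgg]
end

section
/- The intersection ⋂_{l=0}^{n−1} ĥˡ GL_n(𝒪) ĥ⁻ˡ equals the Iwahori subgroup I^G of GL_n(F). -/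
section Aux
variable {F : Type*} [Field F] {n : ℕ}

def Pm (ζ : F) (n l : ℕ) : Matrix (Fin n) (Fin n) F :=
  Matrix.of fun i j => if (i:ℕ) + l = (j:ℕ) then 1
    else if (i:ℕ) + l = n + (j:ℕ) then ζ else 0

def Qm (ζ : F) (n l : ℕ) : Matrix (Fin n) (Fin n) F :=
  Matrix.of fun i j => if (j:ℕ) + l = (i:ℕ) then 1
    else if (j:ℕ) + l = n + (i:ℕ) then ζ⁻¹ else 0

lemma Pm_apply (ζ : F) (l : ℕ) (i j : Fin n) :
    Pm ζ n l i j = if (i:ℕ) + l = (j:ℕ) then 1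
      else if (i:ℕ) + l = n + (j:ℕ) then ζ else 0 := rfl

lemma Qm_apply (ζ : F) (l : ℕ) (i j : Fin n) :
    Qm ζ n l i j = if (j:ℕ) + l = (i:ℕ) then 1
      else if (j:ℕ) + l = n + (i:ℕ) then ζ⁻¹ else 0 := rfl

lemma Pm_mul (ζ : F) (l : ℕ) (hl : l ≤ n) (B : Matrix (Fin n) (Fin n) F) (i m : Fin n) :
    (Pm ζ n l * B) i m =
      if h : (i:ℕ) + l < n then B ⟨(i:ℕ)+l, h⟩ m
      else ζ * B ⟨(i:ℕ)+l-n, by have := i.isLt; omega⟩ m := by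
  rw [Matrix.mul_apply]
  split_ifs with h
  · rw [Fintype.sum_eq_single (⟨(i:ℕ)+l, h⟩ : Fin n)]
    · rw [Pm_apply, if_pos rfl, one_mul]
    · intro k hk
      have hkv : (k:ℕ) ≠ (i:ℕ)+l := fun hc => hk (Fin.ext hc)
      have hk2 := k.isLt
      rw [Pm_apply, if_neg (by omega), if_neg (by omega), zero_mul]
  · rw [Fintype.sum_eq_single (⟨(i:ℕ)+l-n, by have := i.isLt; omega⟩ : Fin n)]
    · have hi := i.isLt
      rw [Pm_apply, if_neg (by show ¬((i:ℕ)+l = (i:ℕ)+l-n); omega),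
        if_pos (by show (i:ℕ)+l = n + ((i:ℕ)+l-n); omega)]
    · intro k hk
      have hkv : (k:ℕ) ≠ (i:ℕ)+l-n := fun hc => hk (Fin.ext hc)
      have hk2 := k.isLt
      rw [Pm_apply, if_neg (by omega), if_neg (by omega), zero_mul]

lemma mul_Qm (ζ : F) (l : ℕ) (hl : l ≤ n) (C : Matrix (Fin n) (Fin n) F) (i j : Fin n) :
    (C * Qm ζ n l) i j =
      if h : (j:ℕ) + l < n then C i ⟨(j:ℕ)+l, h⟩
      else C i ⟨(j:ℕ)+l-n, by have := j.isLt; omega⟩ * ζ⁻¹ := by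
  rw [Matrix.mul_apply]
  split_ifs with h
  · rw [Fintype.sum_eq_single (⟨(j:ℕ)+l, h⟩ : Fin n)]
    · rw [Qm_apply, if_pos rfl, mul_one]
    · intro k hk
      have hkv : (k:ℕ) ≠ (j:ℕ)+l := fun hc => hk (Fin.ext hc)
      have hk2 := k.isLt
      rw [Qm_apply, if_neg (by omega), if_neg (by omega), mul_zero]
  · rw [Fintype.sum_eq_single (⟨(j:ℕ)+l-n, by have := j.isLt; omega⟩ : Fin n)]
    · have hj := j.isLt
      rw [Qm_apply, if_neg (by show ¬((j:ℕ)+l = (j:ℕ)+l-n); omega),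
        if_pos (by show (j:ℕ)+l = n + ((j:ℕ)+l-n); omega)]
    · intro k hk
      have hkv : (k:ℕ) ≠ (j:ℕ)+l-n := fun hc => hk (Fin.ext hc)
      have hk2 := k.isLt
      rw [Qm_apply, if_neg (by omega), if_neg (by omega), mul_zero]

lemma Qm_mul (ζ : F) (l : ℕ) (hl : l ≤ n) (A : Matrix (Fin n) (Fin n) F) (i m : Fin n) :
    (Qm ζ n l * A) i m =
      if h : l ≤ (i:ℕ) then A ⟨(i:ℕ)-l, by have := i.isLt; omega⟩ m
      else ζ⁻¹ * A ⟨n+(i:ℕ)-l, by have := i.isLt; omega⟩ m := by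
  rw [Matrix.mul_apply]
  split_ifs with h
  · rw [Fintype.sum_eq_single (⟨(i:ℕ)-l, by have := i.isLt; omega⟩ : Fin n)]
    · rw [Qm_apply, if_pos (by show (i:ℕ)-l+l = (i:ℕ); omega), one_mul]
    · intro k hk
      have hkv : (k:ℕ) ≠ (i:ℕ)-l := fun hc => hk (Fin.ext hc)
      have hk2 := k.isLt; have hi := i.isLt
      rw [Qm_apply, if_neg (by omega), if_neg (by omega), zero_mul]
  · rw [Fintype.sum_eq_single (⟨n+(i:ℕ)-l, by have := i.isLt; omega⟩ : Fin n)]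
    · rw [Qm_apply, if_neg (by show ¬(n+(i:ℕ)-l+l = (i:ℕ)); omega),
        if_pos (by show n+(i:ℕ)-l+l = n+(i:ℕ); omega)]
    · intro k hk
      have hkv : (k:ℕ) ≠ n+(i:ℕ)-l := fun hc => hk (Fin.ext hc)
      have hk2 := k.isLt
      rw [Qm_apply, if_neg (by omega), if_neg (by omega), zero_mul]

lemma mul_Pm (ζ : F) (l : ℕ) (hl : l ≤ n) (C : Matrix (Fin n) (Fin n) F) (m j : Fin n) :
    (C * Pm ζ n l) m j =
      if h : l ≤ (j:ℕ) then C m ⟨(j:ℕ)-l, by have := j.isLt; omega⟩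
      else C m ⟨n+(j:ℕ)-l, by have := j.isLt; omega⟩ * ζ := by
  rw [Matrix.mul_apply]
  split_ifs with h
  · rw [Fintype.sum_eq_single (⟨(j:ℕ)-l, by have := j.isLt; omega⟩ : Fin n)]
    · rw [Pm_apply, if_pos (by show (j:ℕ)-l+l = (j:ℕ); omega), mul_one]
    · intro k hk
      have hkv : (k:ℕ) ≠ (j:ℕ)-l := fun hc => hk (Fin.ext hc)
      have hk2 := k.isLt; have hj := j.isLt
      rw [Pm_apply, if_neg (by omega), if_neg (by omega), mul_zero]
  · rw [Fintype.sum_eq_single (⟨n+(j:ℕ)-l, by have := j.isLt; omega⟩ : Fin n)]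
    · rw [Pm_apply, if_neg (by show ¬(n+(j:ℕ)-l+l = (j:ℕ)); omega),
        if_pos (by show n+(j:ℕ)-l+l = n+(j:ℕ); omega)]
    · intro k hk
      have hkv : (k:ℕ) ≠ n+(j:ℕ)-l := fun hc => hk (Fin.ext hc)
      have hk2 := k.isLt
      rw [Pm_apply, if_neg (by omega), if_neg (by omega), mul_zero]

lemma Pm_mul_Qm (ζ : F) (hζ0 : ζ ≠ 0) (l : ℕ) (hl : l ≤ n) :
    Pm ζ n l * Qm ζ n l = 1 := by
  ext i j
  have hi := i.isLt; have hj := j.isLt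
  rw [mul_Qm ζ l hl, Matrix.one_apply]
  rcases lt_or_ge ((j:ℕ)+l) n with h | h
  · rw [dif_pos h, Pm_apply]; simp only [Fin.val_mk]
    by_cases hij : i = j
    · have hv : (i:ℕ) = (j:ℕ) := by rw [hij]
      rw [if_pos hij, if_pos (by omega)]
    · have hv : (i:ℕ) ≠ (j:ℕ) := fun hc => hij (Fin.ext hc)
      rw [if_neg hij, if_neg (by omega), if_neg (by omega)]
  · rw [dif_neg (by omega), Pm_apply]; simp only [Fin.val_mk]
    by_cases hij : i = j
    · have hv : (i:ℕ) = (j:ℕ) := by rw [hij]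
      rw [if_pos hij, if_neg (by omega), if_pos (by omega), mul_inv_cancel₀ hζ0]
    · have hv : (i:ℕ) ≠ (j:ℕ) := fun hc => hij (Fin.ext hc)
      rw [if_neg hij, if_neg (by omega), if_neg (by omega), zero_mul]

lemma Pm_zero (ζ : F) : Pm ζ n 0 = 1 := by
  ext i j
  have hi := i.isLt
  rw [Pm_apply, Matrix.one_apply]
  by_cases hij : i = j
  · have hv : (i:ℕ) = (j:ℕ) := by rw [hij]
    rw [if_pos hij, if_pos (by omega)]
  · have hv : (i:ℕ) ≠ (j:ℕ) := fun hc => hij (Fin.ext hc)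
    rw [if_neg hij, if_neg (by omega), if_neg (by omega)]

lemma hHat_eq_Pm (F : Type*) [Field F] (n : ℕ) (hn : 1 ≤ n) (ζ : F) :
    hHat F n ζ = Pm ζ n 1 := by
  ext i j
  have hi := i.isLt; have hj := j.isLt
  rw [Pm_apply]
  show (if (i:ℕ)+1 = (j:ℕ) then 1 else if (i:ℕ) = n-1 ∧ (j:ℕ) = 0 then ζ else 0) = _
  split_ifs <;> first | rfl | omega

lemma hHat_pow_eq_Pm (F : Type*) [Field F] (n : ℕ) (hn : 1 ≤ n) (ζ : F)
    (l : ℕ) (hl : l ≤ n) : hHat F n ζ ^ l = Pm ζ n l := by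
  induction l with
  | zero => rw [pow_zero, Pm_zero]
  | succ l ih =>
    rw [pow_succ, ih (by omega), hHat_eq_Pm F n hn]
    ext i j
    rw [mul_Pm ζ 1 hn]
    have hi := i.isLt; have hj := j.isLt
    split_ifs with h
    · rw [Pm_apply, Pm_apply]; simp only [Fin.val_mk]
      split_ifs <;> first | rfl | omega | (exfalso; omega)
    · rw [Pm_apply, Pm_apply]; simp only [Fin.val_mk]
      split_ifs <;>
        first | rfl | omega | (rw [one_mul]) | (rw [zero_mul]) | (exfalso; omega)

lemma wt_solve (x : WithTop ℤ) (h : 1 + x = 0) : x = -1 := by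
  induction x using WithTop.recTopCoe with
  | top => simp at h
  | coe a =>
    have h' : (1:ℤ) + a = 0 := by exact_mod_cast h
    have ha : a = -1 := by omega
    subst ha
    rfl

lemma wt_neg_one_add (x : WithTop ℤ) (h : 1 ≤ x) : 0 ≤ (-1 : WithTop ℤ) + x := by
  induction x using WithTop.recTopCoe with
  | top => rw [add_top]; exact le_top
  | coe a =>
    have ha : (1:ℤ) ≤ a := by exact_mod_cast h
    have : ((-1 : ℤ) : WithTop ℤ) + (a : WithTop ℤ) = ((-1 + a : ℤ) : WithTop ℤ) := by push_cast; ring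
    rw [show ((-1 : WithTop ℤ)) = ((-1:ℤ) : WithTop ℤ) from rfl, this]
    exact_mod_cast (by omega : (0:ℤ) ≤ -1 + a)

lemma wt_one_add (x : WithTop ℤ) (h : 0 ≤ x) : 1 ≤ (1 : WithTop ℤ) + x :=
  le_add_of_nonneg_right h

end Aux

/-- `F` is a field with surjective discrete valuation `v`, `𝒪` its valuation ring, `ζ` a
uniformizer, `n ≥ 1`.

The intersection `⋂_{l=0}^{n−1} ĥˡ GL_n(𝒪) ĥ⁻ˡ` equals the Iwahori subgroup `I^G` of
`GL_n(F)`. -/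
theorem statement16 (F : Type*) [Field F] (v : AddValuation F (WithTop ℤ))
    (hv : Function.Surjective v) (hv0 : ∀ x : F, v x = ⊤ ↔ x = 0)
    (ζ : F) (hζ : v ζ = 1) (n : ℕ) (hn : 1 ≤ n) :
    (⋂ l ∈ Finset.range n,
        (fun A => hHat F n ζ ^ l * A * (hHat F n ζ ^ l)⁻¹) '' GLnO F v n) =
      IwahoriG F v n := by
  have hζ0 : ζ ≠ 0 := by
    intro h
    rw [h, (hv0 0).mpr rfl] at hζ
    exact (by simp : ((⊤ : WithTop ℤ) ≠ 1)) hζ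
  have hvinv : v ζ⁻¹ = -1 := by
    apply wt_solve
    rw [← hζ, ← v.map_mul, mul_inv_cancel₀ hζ0, v.map_one]
  ext A
  simp only [Set.mem_iInter, Set.mem_image, Finset.mem_range]
  constructor
  · intro hA
    -- l = 0 gives the nonnegativity and determinant conditions
    obtain ⟨B0, hB0, hAB0⟩ := hA 0 (by omega)
    have hA0 : A = B0 := by
      rw [← hAB0, pow_zero, inv_one, one_mul, mul_one]
    refine ⟨by rw [hA0]; exact hB0.2, by rw [hA0]; exact fun i j => hB0.1 i j, ?_⟩
    intro i j hji
    set l : ℕ := n - (i:ℕ) with hldef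
    have hi := i.isLt; have hj := j.isLt
    have hl : l ≤ n := by omega
    obtain ⟨B, hB, hAB⟩ := hA l (by omega)
    rw [hHat_pow_eq_Pm F n hn ζ l hl,
      Matrix.inv_eq_right_inv (Pm_mul_Qm ζ hζ0 l hl)] at hAB
    have hentry : A i j = ζ * B ⟨(i:ℕ)+l-n, by omega⟩ ⟨(j:ℕ)+l, by omega⟩ := by
      rw [← hAB, mul_Qm ζ l hl, dif_pos (by omega : (j:ℕ)+l < n),
        Pm_mul ζ l hl, dif_neg (by omega : ¬((i:ℕ)+l < n))]
    rw [hentry, v.map_mul, hζ]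
    exact wt_one_add _ (hB.1 _ _)
  · rintro ⟨hdet, hnn, hlow⟩ l hln
    have hl : l ≤ n := by omega
    have hPQ : Pm ζ n l * Qm ζ n l = 1 := Pm_mul_Qm ζ hζ0 l hl
    refine ⟨Qm ζ n l * A * Pm ζ n l, ⟨?_, ?_⟩, ?_⟩
    · intro i j
      have hi := i.isLt; have hj := j.isLt
      rw [mul_Pm ζ l hl]
      split_ifs with h2
      · rw [Qm_mul ζ l hl]
        split_ifs with h1
        · exact hnn _ _
        · rw [v.map_mul, hvinv]
          exact wt_neg_one_add _ (hlow _ _ (by simp only [Fin.val_mk]; omega))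
      · rw [Qm_mul ζ l hl]
        split_ifs with h1
        · rw [v.map_mul, hζ]
          exact add_nonneg (hnn _ _) zero_le_one
        · rw [mul_comm, ← mul_assoc, mul_inv_cancel₀ hζ0, one_mul]
          exact hnn _ _
    · have h1 : (Pm ζ n l).det * (Qm ζ n l).det = 1 := by
        rw [← Matrix.det_mul, hPQ, Matrix.det_one]
      have : (Qm ζ n l * A * Pm ζ n l).det = A.det := by
        rw [Matrix.det_mul, Matrix.det_mul]
        calc (Qm ζ n l).det * A.det * (Pm ζ n l).det
            = A.det * ((Pm ζ n l).det * (Qm ζ n l).det) := by ring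
          _ = A.det := by rw [h1, mul_one]
      rw [this, hdet]
    · rw [hHat_pow_eq_Pm F n hn ζ l hl,
        Matrix.inv_eq_right_inv hPQ]
      calc Pm ζ n l * (Qm ζ n l * A * Pm ζ n l) * Qm ζ n l
          = (Pm ζ n l * Qm ζ n l) * A * (Pm ζ n l * Qm ζ n l) := by
            simp only [mul_assoc]
        _ = A := by rw [hPQ, one_mul, mul_one]
end

section
/- The functor F : 𝒫(X^K)^op → (G/K ↓ ι), which sends a simplex σ with K ⊆ G_σ to the object (σ, pr_σ) — where pr_σ : G/K → G/G_σ is the canonical projection gK ↦ gG_σ — and sends a morphism σ → τ of 𝒫(X^K)^op (i.e. an inclusion τ ⊆ σ of simplices) to the morphism of (G/K ↓ ι) given by eG_τ : τ → σ in 𝒞, is well defined and is an equivalence of categories (it is full, faithful, and every object of (G/K ↓ ι) is isomorphic to an object in its image). -/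
/-- The pointwise stabilizer `G_σ = {g ∈ G : gx = x for all x ∈ σ}` of a finite set
`σ` of vertices. -/
def pointStab (G : Type*) [Group G] {V : Type*} [MulAction G V] (σ : Finset V) :
    Subgroup G where
  carrier := {g : G | ∀ x ∈ σ, g • x = x}
  one_mem' := by intro x hx; simp
  mul_mem' := by
    intro a b ha hb x hx
    rw [mul_smul, hb x hx, ha x hx]
  inv_mem' := by
    intro a ha x hx
    rw [inv_smul_eq_iff]
    exact (ha x hx).symm


section Aux
variable {G V : Type*} [Group G] [MulAction G V]

lemma mem_pointStab_iff {g : G} {σ : Finset V} :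
    g ∈ pointStab G σ ↔ ∀ x ∈ σ, g • x = x := Iff.rfl

lemma pointStab_mono {σ τ : Finset V} (h : τ ⊆ σ) :
    pointStab G σ ≤ pointStab G τ := fun g hg x hx => hg x (h hx)

lemma mem_pointStab_image_iff (g₀ g : G) (σ : Finset V) [DecidableEq V] :
    g ∈ pointStab G (σ.image fun x => g₀ • x) ↔ g₀⁻¹ * g * g₀ ∈ pointStab G σ := by
  constructor
  · intro h x hx
    have := h (g₀ • x) (Finset.mem_image_of_mem _ hx)
    rw [mul_smul, mul_smul, this, inv_smul_smul]
  · intro h y hy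
    rcases Finset.mem_image.mp hy with ⟨x, hx, rfl⟩
    have := h x hx
    rw [mul_smul, mul_smul] at this
    calc g • g₀ • x = g₀ • g₀⁻¹ • g • g₀ • x := (smul_inv_smul _ _).symm
    _ = g₀ • x := by rw [this]

lemma quot_smul_mk (K : Subgroup G) (a b : G) :
    a • (QuotientGroup.mk b : G ⧸ K) = QuotientGroup.mk (a * b) := rfl

/-- The canonical projection `G/K → G/H` for `K ≤ H`. -/
def projMap (K H : Subgroup G) (h : K ≤ H) : G ⧸ K → G ⧸ H :=
  Quotient.map' id (fun a b hab => by
    rw [QuotientGroup.leftRel_apply] at hab ⊢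
    exact h hab)

lemma projMap_mk (K H : Subgroup G) (h : K ≤ H) (a : G) :
    projMap K H h (QuotientGroup.mk a) = QuotientGroup.mk a := rfl

end Aux

/-- `G` is a group, `V` a `G`-set and `X` a collection of nonempty finite subsets of `V`
(simplices) closed under passing to nonempty subsets and under the `G`-action, on which
the action is cellular.  `𝒞` is the category with objects the simplices of `X` and
morphisms `σ → τ` the cosets `gG_σ` with `gσ ⊆ τ` (composition
`hG_τ ∘ gG_σ = hgG_σ`), and `ι : 𝒞^op → (G-sets)` sends `σ` to `G/G_σ` and
`gG_σ : σ → τ` to `R_g : G/G_τ → G/G_σ, g'G_τ ↦ g'gG_σ`.  `K ≤ G` is a subgroup,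
`(G/K ↓ ι)` is the comma category whose objects are pairs `(σ, u)` with `σ ∈ X` and
`u : G/K → G/G_σ` a `G`-map, and whose morphisms `(σ, u) → (τ, v)` are the morphisms
`gG_τ : τ → σ` of `𝒞` with `R_g ∘ u = v`; and `𝒫(X^K)` is the poset of simplices
`σ ∈ X` with `K ⊆ G_σ`, ordered by inclusion.

The functor `F : 𝒫(X^K)^op → (G/K ↓ ι)`, `σ ↦ (σ, pr_σ)` (with `pr_σ : G/K → G/G_σ` the
canonical projection) sending an inclusion `τ ⊆ σ` to the morphism given by
`eG_τ : τ → σ`, is well defined and an equivalence of categories.  The four clauses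
below say, respectively:
(1) `F` is well defined on objects: the canonical projection `pr_σ` exists (as a map on
    the quotient) and is `G`-equivariant;
(2) `F` is well defined on morphisms: for `τ ⊆ σ`, any representative `g` of the coset
    `eG_τ` yields a morphism `F(σ) = (σ, pr_σ) → F(τ) = (τ, pr_τ)` of `(G/K ↓ ι)`,
    i.e. `g·τ ⊆ σ` and `R_g ∘ pr_σ = pr_τ`;
(3) `F` is full and faithful: any `g` defining a morphism `F(σ) → F(τ)` represents the
    coset `eG_τ` and forces `τ ⊆ σ`;
(4) `F` is essentially surjective: every object `(σ, u)` of `(G/K ↓ ι)` is isomorphic to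
    an object `F(τ) = (τ, pr_τ)` in the image of `F`, via morphisms given by
    `gG_σ : σ → τ` and `g'G_τ : τ → σ` whose two composites `gg'G_τ` and `g'gG_σ` are
    the respective identity cosets. -/
theorem statement17 {G V : Type*} [Group G] [MulAction G V] [DecidableEq V]
    (X : Set (Finset V))
    (hne : ∀ σ ∈ X, σ.Nonempty)
    (hsub : ∀ σ ∈ X, ∀ τ : Finset V, τ ⊆ σ → τ.Nonempty → τ ∈ X)
    (hact : ∀ (g : G), ∀ σ ∈ X, Finset.image (fun x => g • x) σ ∈ X)
    (hcell : ∀ (g : G), ∀ σ ∈ X, Finset.image (fun x => g • x) σ = σ →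
      ∀ x ∈ σ, g • x = x)
    (K : Subgroup G) :
    -- (1) F is well defined on objects
    (∀ σ : Finset V, σ ∈ X → K ≤ pointStab G σ →
      ∃ u : G ⧸ K → G ⧸ pointStab G σ,
        (∀ a : G, u (QuotientGroup.mk a) = QuotientGroup.mk a) ∧
        ∀ (a : G) (x : G ⧸ K), u (a • x) = a • u x) ∧
    -- (2) F is well defined on morphisms
    (∀ σ τ : Finset V, σ ∈ X → τ ∈ X → K ≤ pointStab G σ → K ≤ pointStab G τ →
      ∀ uσ : G ⧸ K → G ⧸ pointStab G σ,
        (∀ a : G, uσ (QuotientGroup.mk a) = QuotientGroup.mk a) →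
      ∀ uτ : G ⧸ K → G ⧸ pointStab G τ,
        (∀ a : G, uτ (QuotientGroup.mk a) = QuotientGroup.mk a) →
      τ ⊆ σ → ∀ g : G, g ∈ pointStab G τ →
        (∀ x ∈ τ, g • x ∈ σ) ∧
        (∀ a b : G, uσ (QuotientGroup.mk a) = QuotientGroup.mk b →
          uτ (QuotientGroup.mk a) = QuotientGroup.mk (b * g))) ∧
    -- (3) F is full and faithful
    (∀ σ τ : Finset V, σ ∈ X → τ ∈ X → K ≤ pointStab G σ → K ≤ pointStab G τ →
      ∀ uσ : G ⧸ K → G ⧸ pointStab G σ,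
        (∀ a : G, uσ (QuotientGroup.mk a) = QuotientGroup.mk a) →
      ∀ uτ : G ⧸ K → G ⧸ pointStab G τ,
        (∀ a : G, uτ (QuotientGroup.mk a) = QuotientGroup.mk a) →
      ∀ g : G, (∀ x ∈ τ, g • x ∈ σ) →
        (∀ a b : G, uσ (QuotientGroup.mk a) = QuotientGroup.mk b →
          uτ (QuotientGroup.mk a) = QuotientGroup.mk (b * g)) →
        τ ⊆ σ ∧ g ∈ pointStab G τ) ∧
    -- (4) F is essentially surjective
    (∀ σ : Finset V, σ ∈ X →
      ∀ u : G ⧸ K → G ⧸ pointStab G σ, (∀ (a : G) (x : G ⧸ K), u (a • x) = a • u x) →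
      ∃ τ : Finset V, τ ∈ X ∧ K ≤ pointStab G τ ∧
        ∃ uτ : G ⧸ K → G ⧸ pointStab G τ,
          (∀ a : G, uτ (QuotientGroup.mk a) = QuotientGroup.mk a) ∧
          ∃ g g' : G,
            (∀ x ∈ σ, g • x ∈ τ) ∧
            (∀ a b : G, uτ (QuotientGroup.mk a) = QuotientGroup.mk b →
              u (QuotientGroup.mk a) = QuotientGroup.mk (b * g)) ∧
            (∀ x ∈ τ, g' • x ∈ σ) ∧
            (∀ a b : G, u (QuotientGroup.mk a) = QuotientGroup.mk b →
              uτ (QuotientGroup.mk a) = QuotientGroup.mk (b * g')) ∧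
            g * g' ∈ pointStab G τ ∧ g' * g ∈ pointStab G σ) := by
  have qeq : ∀ (H : Subgroup G) (a b : G),
      (QuotientGroup.mk a : G ⧸ H) = QuotientGroup.mk b ↔ a⁻¹ * b ∈ H :=
    fun H a b => QuotientGroup.eq
  refine ⟨?_, ?_, ?_, ?_⟩
  · -- (1)
    intro σ hσ hK
    refine ⟨projMap K (pointStab G σ) hK, fun a => rfl, ?_⟩
    intro a x
    induction x using QuotientGroup.induction_on with
    | H b => rfl
  · -- (2)
    intro σ τ hσ hτ hKσ hKτ uσ huσ uτ huτ hsub g hg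
    constructor
    · intro x hx
      rw [hg x hx]; exact hsub hx
    · intro a b hab
      rw [huσ a] at hab
      have h1 : a⁻¹ * b ∈ pointStab G σ := (qeq _ _ _).mp hab
      rw [huτ a, qeq]
      have : a⁻¹ * b * g ∈ pointStab G τ :=
        mul_mem (pointStab_mono hsub h1) hg
      rwa [mul_assoc] at this
  · -- (3)
    intro σ τ hσ hτ hKσ hKτ uσ huσ uτ huτ g hg hcomm
    have h1 := hcomm 1 1 (huσ 1)
    rw [huτ 1, one_mul, qeq, inv_one, one_mul] at h1
    refine ⟨?_, h1⟩
    intro x hx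
    have := hg x hx
    rwa [h1 x hx] at this
  · -- (4)
    intro σ hσ u hu
    obtain ⟨g₀, hg₀⟩ := Quotient.exists_rep (u (QuotientGroup.mk 1))
    have hg₀' : u (QuotientGroup.mk 1) = QuotientGroup.mk g₀ := hg₀.symm
    have hua : ∀ a : G, u (QuotientGroup.mk a) = QuotientGroup.mk (a * g₀) := by
      intro a
      have : (QuotientGroup.mk a : G ⧸ K) = a • QuotientGroup.mk 1 := by
        rw [quot_smul_mk, mul_one]
      rw [this, hu, hg₀', quot_smul_mk]
    have hKτ : K ≤ pointStab G (σ.image fun x => g₀ • x) := by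
      intro k hk
      rw [mem_pointStab_image_iff]
      have h1 : (QuotientGroup.mk k : G ⧸ K) = QuotientGroup.mk 1 :=
        (qeq K k 1).mpr (by simpa using inv_mem hk)
      have h2 : (QuotientGroup.mk (k * g₀) : G ⧸ (pointStab G σ)) =
          QuotientGroup.mk (1 * g₀) := by
        rw [← hua, ← hua, h1]
      have h3 := (qeq _ _ _).mp h2
      have h4 : (k * g₀)⁻¹ * (1 * g₀) = g₀⁻¹ * k⁻¹ * g₀ := by group
      rw [h4] at h3
      have h5 := inv_mem h3
      simpa [mul_assoc] using h5
    refine ⟨σ.image fun x => g₀ • x, hact g₀ σ hσ, hKτ,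
      projMap K _ hKτ, fun a => rfl, g₀, g₀⁻¹, ?_, ?_, ?_, ?_, ?_, ?_⟩
    · intro x hx; exact Finset.mem_image_of_mem _ hx
    · intro a b hab
      have h1 : a⁻¹ * b ∈ pointStab G (σ.image fun x => g₀ • x) :=
        (qeq _ _ _).mp hab
      rw [mem_pointStab_image_iff] at h1
      rw [hua a, qeq]
      have h4 : (a * g₀)⁻¹ * (b * g₀) = g₀⁻¹ * (a⁻¹ * b) * g₀ := by group
      rw [h4]
      exact h1
    · intro x hx
      rcases Finset.mem_image.mp hx with ⟨y, hy, rfl⟩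
      rwa [inv_smul_smul]
    · intro a b hab
      rw [hua a] at hab
      have h1 : (a * g₀)⁻¹ * b ∈ pointStab G σ := (qeq _ _ _).mp hab
      rw [show projMap K _ hKτ (QuotientGroup.mk a) = QuotientGroup.mk a from rfl,
        qeq, mem_pointStab_image_iff]
      have h4 : g₀⁻¹ * (a⁻¹ * (b * g₀⁻¹)) * g₀ = (a * g₀)⁻¹ * b := by group
      rw [h4]
      exact h1
    · rw [mul_inv_cancel]; exact one_mem _
    · rw [inv_mul_cancel]; exact one_mem _
end
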